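/- arXiv:1907.02302 — 2 statements merged into one kernel-verified Lean document; each statement's English description precedes it below -/
import Mathlib

section
/- Let F be a field and let d ≥ 1 and ν ≥ 1 be integers. For a ∈ F define the polynomial L_a ∈ F[U₁,…,U_d] by L_a(U₁,…,U_d) = a^d + Σ_{k=0}^{d−1} U_{d−k} · a^k. If x₁,…,x_ν, y₁,…,y_ν ∈ F satisfy the identity Π_{i=1}^{ν} L_{x_i}(U₁,…,U_d) · L_{y_i}(V₁,…,V_d) = Π_{i=1}^{ν} L_{y_i}(U₁,…,U_d) · L_{x_i}(V₁,…,V_d) in the polynomial ring F[U₁,…,U_d, V₁,…,V_d], then the multiset {x₁,…,x_ν} equals the multiset {y₁,…,y_ν}. -/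
open MvPolynomial in
/-- The linear form `L_a(W₁,…,W_d) = a^d + ∑_{k=0}^{d-1} W_{d-k} a^k` in the variables
`W j = X (e j)`, for an injection `e` of `Fin d` into the variable index type `σ`. -/
noncomputable def Lform {F : Type} [Field F] {σ : Type} (d : ℕ) (e : Fin d → σ) (a : F) :
    MvPolynomial σ F :=
  C (a ^ d) + ∑ j : Fin d, X (e j) * C (a ^ (d - 1 - (j : ℕ)))

open Polynomial in
lemma core {R : Type} [CommRing R] (d : ℕ) (a : R) :
    (X + C a)^d =
      C (a^d) + ∑ j : Fin d,
        (C ((d.choose ((j:ℕ)+1) : R)) * X^((j:ℕ)+1)) * C (a^(d-1-(j:ℕ))) := by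
  rw [add_pow, Finset.sum_range_succ', Fin.sum_univ_eq_sum_range
    (fun j => (C ((d.choose (j+1) : R)) * X^(j+1)) * C (a^(d-1-j)))]
  rw [add_comm]
  congr 1
  · simp
  · apply Finset.sum_congr rfl
    intro k hk
    simp only [Finset.mem_range] at hk
    have h1 : d - 1 - k = d - (k + 1) := by omega
    rw [h1, ← C_pow, Polynomial.C_eq_natCast]
    ring

noncomputable def subst {F : Type} [Field F] (d : ℕ) :
    Fin d ⊕ Fin d → Polynomial (Polynomial F)
  | Sum.inl j => Polynomial.C (Polynomial.C ((d.choose ((j:ℕ)+1) : F))) * Polynomial.X^((j:ℕ)+1)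
  | Sum.inr j => Polynomial.C (Polynomial.C ((d.choose ((j:ℕ)+1) : F)) * Polynomial.X^((j:ℕ)+1))

open Polynomial in
lemma algmap {F : Type} [Field F] (c : F) :
    algebraMap F (Polynomial (Polynomial F)) c = C (C c) := rfl

open Polynomial in
lemma lemA {F : Type} [Field F] (d : ℕ) (a : F) :
    MvPolynomial.aeval (subst d) (Lform d (Sum.inl : Fin d → Fin d ⊕ Fin d) a)
      = (X + C (C a))^d := by
  rw [core]
  simp only [Lform, map_add, map_sum, map_mul, MvPolynomial.aeval_C, MvPolynomial.aeval_X,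
    algmap, subst, ← C_pow, ← map_pow, map_natCast]

open Polynomial in
lemma lemB {F : Type} [Field F] (d : ℕ) (a : F) :
    MvPolynomial.aeval (subst d) (Lform d (Sum.inr : Fin d → Fin d ⊕ Fin d) a)
      = C ((X + C a)^d) := by
  rw [core]
  simp only [Lform, map_add, map_sum, map_mul, MvPolynomial.aeval_C, MvPolynomial.aeval_X,
    algmap, subst, map_pow, map_natCast]

open Polynomial in
/-- the factorization step in the proof of Theorem 8 of the paper.
If `∏ i, L_{x i}(U) · L_{y i}(V) = ∏ i, L_{y i}(U) · L_{x i}(V)` in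
`F[U₁,…,U_d,V₁,…,V_d]`, then `(x i)` and `(y i)` agree as multisets. -/
theorem multiset_eq_of_Lform_product_eq
    (F : Type) [Field F] (d ν : ℕ) (hd : 1 ≤ d) (hν : 1 ≤ ν)
    (x y : Fin ν → F)
    (hid : (∏ i : Fin ν,
        (Lform d (Sum.inl : Fin d → Fin d ⊕ Fin d) (x i) *
          Lform d (Sum.inr : Fin d → Fin d ⊕ Fin d) (y i))) =
      ∏ i : Fin ν,
        (Lform d (Sum.inl : Fin d → Fin d ⊕ Fin d) (y i) *
          Lform d (Sum.inr : Fin d → Fin d ⊕ Fin d) (x i))) :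
    Multiset.map x Finset.univ.val = Multiset.map y Finset.univ.val := by
  classical
  have h2 := congrArg (MvPolynomial.aeval (subst (F := F) d)) hid
  simp only [map_prod, map_mul, lemA, lemB] at h2
  set P : Polynomial F := ∏ i : Fin ν, (X + C (x i)) with hPdef
  set Q : Polynomial F := ∏ i : Fin ν, (X + C (y i)) with hQdef
  set A : Polynomial (Polynomial F) := ∏ i : Fin ν, (X + C (C (x i))) with hAdef
  set B : Polynomial (Polynomial F) := ∏ i : Fin ν, (X + C (C (y i))) with hBdef
  have h3 : A ^ d * C (Q ^ d) = B ^ d * C (P ^ d) := by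
    rw [hPdef, hQdef, hAdef, hBdef]
    simpa [Finset.prod_mul_distrib, Finset.prod_pow, map_prod] using h2
  have hA : A.Monic := monic_prod_of_monic _ _ (fun i _ => monic_X_add_C _)
  have hB : B.Monic := monic_prod_of_monic _ _ (fun i _ => monic_X_add_C _)
  have hAdeg : A.natDegree = ν := by
    rw [hAdef, natDegree_prod_of_monic _ _ (fun i _ => monic_X_add_C _)]
    simp
  have hBdeg : B.natDegree = ν := by
    rw [hBdef, natDegree_prod_of_monic _ _ (fun i _ => monic_X_add_C _)]
    simp
  have key : Q ^ d = P ^ d := by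
    have hcoef := congrArg (fun p => Polynomial.coeff p (d * ν)) h3
    simp only [coeff_mul_C] at hcoef
    have e1 : (A ^ d).coeff (d * ν) = 1 := by
      have := (hA.pow d).coeff_natDegree
      rwa [natDegree_pow, hAdeg] at this
    have e2 : (B ^ d).coeff (d * ν) = 1 := by
      have := (hB.pow d).coeff_natDegree
      rwa [natDegree_pow, hBdeg] at this
    rw [e1, e2, one_mul, one_mul] at hcoef
    exact hcoef
  have hProots : P.roots = Multiset.map (fun i => - x i) Finset.univ.val := by
    have hP : P = (Multiset.map (fun a => X - C a)
        (Multiset.map (fun i => - x i) Finset.univ.val)).prod := by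
      rw [hPdef, Finset.prod_eq_multiset_prod, Multiset.map_map]
      congr 1
      apply Multiset.map_congr rfl
      intro i _
      simp [sub_neg_eq_add]
    rw [hP, roots_multiset_prod_X_sub_C]
  have hQroots : Q.roots = Multiset.map (fun i => - y i) Finset.univ.val := by
    have hQ : Q = (Multiset.map (fun a => X - C a)
        (Multiset.map (fun i => - y i) Finset.univ.val)).prod := by
      rw [hQdef, Finset.prod_eq_multiset_prod, Multiset.map_map]
      congr 1
      apply Multiset.map_congr rfl
      intro i _
      simp [sub_neg_eq_add]
    rw [hQ, roots_multiset_prod_X_sub_C]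
  have hr : d • (Multiset.map (fun i => - y i) Finset.univ.val)
      = d • (Multiset.map (fun i => - x i) Finset.univ.val) := by
    rw [← hProots, ← hQroots, ← roots_pow, ← roots_pow, key]
  have hmxy : (Multiset.map (fun i => - y i) Finset.univ.val)
      = (Multiset.map (fun i => - x i) Finset.univ.val) := by
    ext a
    have := congrArg (Multiset.count a) hr
    simp only [Multiset.count_nsmul] at this
    exact Nat.eq_of_mul_eq_mul_left (by omega) this
  have := congrArg (Multiset.map (fun a : F => -a)) hmxy
  simp only [Multiset.map_map, Function.comp, neg_neg] at this
  exact this.symm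
end

section
/- Let K be a finite extension of the rational function field F_q(T), let R > 0, M₁ > 0 and M₂ > 1 be real numbers, and let A' be a nonempty finite set of divisors D of K satisfying deg D₀ + deg D_∞ ≤ R. Then there exist a finite set A₀ of divisors of K, each satisfying deg D₀ + deg D_∞ ≤ R, and a divisor B of K, such that: (i) D + B ∈ A' for every D ∈ A₀; (ii) #A₀ ≥ M₂^{−R/M₁} · #A'; and (iii) for every effective divisor E of K with deg E > M₁, #{ D ∈ A₀ : E ≤ D₀ or E ≤ D_∞ } < (2/M₂) · #A₀. -/
/-- A place of `K` over the constant field `Fq`: a normalized (surjective) discrete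
additive valuation `K → ℤ ∪ {∞}` that is trivial on `Fq`. -/
structure FFPlace (Fq K : Type) [Field Fq] [Field K] [Algebra Fq K] where
  ord : K → WithTop ℤ
  ord_zero : ord 0 = ⊤
  ord_mul : ∀ x y : K, ord (x * y) = ord x + ord y
  ord_add : ∀ x y : K, min (ord x) (ord y) ≤ ord (x + y)
  ord_surj : Function.Surjective ord
  ord_triv : ∀ c : Fq, c ≠ 0 → ord (algebraMap Fq K c) = 0

namespace FFPlace

variable {Fq K : Type} [Field Fq] [Field K] [Algebra Fq K]

/-- The valuation ring of a place. -/
def ring (P : FFPlace Fq K) : Subring K where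
  carrier := {x | 0 ≤ P.ord x}
  zero_mem' := by simp only [Set.mem_setOf_eq, P.ord_zero]; exact le_top
  one_mem' := by
    have h := P.ord_triv 1 one_ne_zero
    rw [map_one] at h
    simp only [Set.mem_setOf_eq, h, le_refl]
  add_mem' := fun hx hy => le_trans (le_min hx hy) (P.ord_add _ _)
  mul_mem' := fun hx hy => by
    simp only [Set.mem_setOf_eq, P.ord_mul]; exact add_nonneg hx hy
  neg_mem' := by
    intro x hx
    have h1 : P.ord (-1 : K) = 0 := by
      have h := P.ord_triv (-1) (neg_ne_zero.mpr one_ne_zero)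
      rwa [map_neg, map_one] at h
    have h2 : P.ord (-x) = P.ord x := by
      rw [show (-x : K) = -1 * x by ring, P.ord_mul, h1, zero_add]
    simpa only [Set.mem_setOf_eq, h2] using hx

/-- The maximal ideal of the valuation ring of a place. -/
def maxIdeal (P : FFPlace Fq K) : Ideal P.ring where
  carrier := {x | 0 < P.ord (x : K)}
  zero_mem' := by
    simp only [Set.mem_setOf_eq, Subring.coe_zero, P.ord_zero]
    exact WithTop.top_pos
  add_mem' := by
    intro x y hx hy
    exact lt_of_lt_of_le (lt_min hx hy) (P.ord_add _ _)
  smul_mem' := by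
    intro r x hx
    show 0 < P.ord ((r : K) * (x : K))
    rw [P.ord_mul]
    exact lt_of_lt_of_le hx (le_add_of_nonneg_left r.2)

/-- The residue field of a place. -/
def Residue (P : FFPlace Fq K) : Type := P.ring ⧸ P.maxIdeal

noncomputable instance (P : FFPlace Fq K) : CommRing P.Residue :=
  inferInstanceAs (CommRing (P.ring ⧸ P.maxIdeal))

/-- The constants map into the valuation ring of any place. -/
def constHom (P : FFPlace Fq K) : Fq →+* P.ring :=
  (algebraMap Fq K).codRestrict P.ring (fun c => by
    by_cases hc : c = 0
    · subst hc
      simp only [map_zero]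
      exact P.ring.zero_mem
    · show (0 : WithTop ℤ) ≤ P.ord _
      rw [P.ord_triv c hc])

/-- The embedding of the constant field into the residue field of a place. -/
noncomputable def residueHom (P : FFPlace Fq K) : Fq →+* P.Residue :=
  (Ideal.Quotient.mk P.maxIdeal).comp P.constHom

/-- The degree of a place: the dimension of its residue field over the constant field. -/
noncomputable def deg (P : FFPlace Fq K) : ℕ :=
  letI : Algebra Fq P.Residue := P.residueHom.toAlgebra
  Module.finrank Fq P.Residue

/-- The order of `f` at the place `P`, as an integer (junk value `0` for `f = 0`). -/
noncomputable def ordZ (P : FFPlace Fq K) (f : K) : ℤ := (P.ord f).untopD 0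

end FFPlace

/-- A divisor of `K` (relative to the constant field `Fq`): a formal finite
`ℤ`-linear combination of places of `K`. -/
abbrev FFDivisor (Fq K : Type) [Field Fq] [Field K] [Algebra Fq K] : Type :=
  FFPlace Fq K →₀ ℤ

namespace FFDivisor

variable {Fq K : Type} [Field Fq] [Field K] [Algebra Fq K]

/-- The degree of a divisor. -/
noncomputable def deg (D : FFDivisor Fq K) : ℤ :=
  D.sum fun P n => n * (P.deg : ℤ)

/-- The zero part `D₀` of a divisor `D`. -/
noncomputable def pos (D : FFDivisor Fq K) : FFDivisor Fq K :=
  D.mapRange (fun n => max n 0) (by simp)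

/-- The pole part `D_∞` of a divisor `D`. -/
noncomputable def neg (D : FFDivisor Fq K) : FFDivisor Fq K :=
  D.mapRange (fun n => max (-n) 0) (by simp)

end FFDivisor

namespace FFDivisor

variable {Fq K : Type} [Field Fq] [Field K] [Algebra Fq K]

lemma deg_add (D E : FFDivisor Fq K) : (D + E).deg = D.deg + E.deg :=
  Finsupp.sum_add_index' (by simp) (by intros; ring)

lemma pos_apply (D : FFDivisor Fq K) (P : FFPlace Fq K) : D.pos P = max (D P) 0 :=
  Finsupp.mapRange_apply

lemma neg_apply (D : FFDivisor Fq K) (P : FFPlace Fq K) : D.neg P = max (-(D P)) 0 :=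
  Finsupp.mapRange_apply

lemma deg_nonneg {D : FFDivisor Fq K} (h : 0 ≤ D) : 0 ≤ D.deg := by
  refine Finset.sum_nonneg fun P _ => ?_
  have := Finsupp.le_def.mp h P
  simp only [Finsupp.coe_zero, Pi.zero_apply] at this
  exact mul_nonneg this (Int.natCast_nonneg _)

lemma pos_sub_of_le {D E : FFDivisor Fq K} (hE : 0 ≤ E) (h : E ≤ D.pos) :
    (D - E).pos = D.pos - E := by
  ext P
  have h1 := Finsupp.le_def.mp hE P
  have h2 := Finsupp.le_def.mp h P
  simp only [Finsupp.coe_zero, Pi.zero_apply] at h1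
  rw [pos_apply] at h2
  rw [pos_apply, Finsupp.sub_apply, Finsupp.sub_apply, pos_apply]
  omega

lemma neg_sub_of_le {D E : FFDivisor Fq K} (hE : 0 ≤ E) (h : E ≤ D.pos) :
    (D - E).neg = D.neg := by
  ext P
  have h1 := Finsupp.le_def.mp hE P
  have h2 := Finsupp.le_def.mp h P
  simp only [Finsupp.coe_zero, Pi.zero_apply] at h1
  rw [pos_apply] at h2
  rw [neg_apply, Finsupp.sub_apply, neg_apply]
  omega

lemma neg_add_of_le {D E : FFDivisor Fq K} (hE : 0 ≤ E) (h : E ≤ D.neg) :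
    (D + E).neg = D.neg - E := by
  ext P
  have h1 := Finsupp.le_def.mp hE P
  have h2 := Finsupp.le_def.mp h P
  simp only [Finsupp.coe_zero, Pi.zero_apply] at h1
  rw [neg_apply] at h2
  rw [neg_apply, Finsupp.add_apply, Finsupp.sub_apply, neg_apply]
  omega

lemma pos_add_of_le {D E : FFDivisor Fq K} (hE : 0 ≤ E) (h : E ≤ D.neg) :
    (D + E).pos = D.pos := by
  ext P
  have h1 := Finsupp.le_def.mp hE P
  have h2 := Finsupp.le_def.mp h P
  simp only [Finsupp.coe_zero, Pi.zero_apply] at h1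
  rw [neg_apply] at h2
  rw [pos_apply, Finsupp.add_apply, pos_apply]
  omega

/-- `deg D₀ + deg D_∞`. -/
noncomputable def dsum (D : FFDivisor Fq K) : ℤ := D.pos.deg + D.neg.deg

lemma pos_nonneg (D : FFDivisor Fq K) : 0 ≤ D.pos :=
  Finsupp.le_def.mpr fun P => by
    rw [pos_apply]; simp
lemma neg_nonneg (D : FFDivisor Fq K) : 0 ≤ D.neg :=
  Finsupp.le_def.mpr fun P => by
    rw [neg_apply]; simp

lemma dsum_nonneg (D : FFDivisor Fq K) : 0 ≤ D.dsum :=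
  add_nonneg (deg_nonneg (pos_nonneg D)) (deg_nonneg (neg_nonneg D))

lemma deg_sub_of_le {X E : FFDivisor Fq K} : (X - E).deg = X.deg - E.deg := by
  have := deg_add (X - E) E
  rw [sub_add_cancel] at this
  omega

lemma dsum_sub {D E : FFDivisor Fq K} (hE : 0 ≤ E) (h : E ≤ D.pos) :
    (D - E).dsum = D.dsum - E.deg := by
  unfold dsum
  rw [pos_sub_of_le hE h, neg_sub_of_le hE h, deg_sub_of_le]
  ring

lemma dsum_add {D E : FFDivisor Fq K} (hE : 0 ≤ E) (h : E ≤ D.neg) :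
    (D + E).dsum = D.dsum - E.deg := by
  unfold dsum
  rw [pos_add_of_le hE h, neg_add_of_le hE h, deg_sub_of_le]
  ring

end FFDivisor

open scoped Classical in
lemma FFDivisor.regularize {Fq K : Type} [Field Fq] [Field K] [Algebra Fq K]
    (M₁ M₂ : ℝ) (hM₁ : 0 < M₁) (hM₂ : 1 < M₂) :
    ∀ (n : ℕ) (A : Finset (FFDivisor Fq K)), A.Nonempty →
      (∀ D ∈ A, ((FFDivisor.dsum D : ℝ)) < n * M₁) →
      ∃ (A₀ : Finset (FFDivisor Fq K)) (B : FFDivisor Fq K) (k : ℕ),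
        A₀.Nonempty ∧
        (∀ D ∈ A₀, D + B ∈ A ∧
          (FFDivisor.dsum D : ℝ) + k * M₁ ≤ (FFDivisor.dsum (D + B) : ℝ)) ∧
        ((A.card : ℝ) ≤ M₂ ^ k * A₀.card) ∧
        (∀ E : FFDivisor Fq K, 0 ≤ E → M₁ < (E.deg : ℝ) →
          ((A₀.filter fun D => E ≤ D.pos ∨ E ≤ D.neg).card : ℝ) < 2 / M₂ * A₀.card) := by
  have hM₂0 : (0:ℝ) < M₂ := lt_trans one_pos hM₂
  intro n
  induction n with
  | zero =>
    intro A hne hbound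
    obtain ⟨D, hD⟩ := hne
    have h1 := hbound D hD
    have h0 : (0:ℝ) ≤ (FFDivisor.dsum D : ℝ) := by
      exact_mod_cast FFDivisor.dsum_nonneg D
    simp only [Nat.cast_zero, zero_mul] at h1
    linarith
  | succ n ih =>
    intro A hne hbound
    by_cases hbad : ∃ E : FFDivisor Fq K, 0 ≤ E ∧ M₁ < (E.deg : ℝ) ∧
        2 / M₂ * A.card ≤ ((A.filter fun D => E ≤ D.pos ∨ E ≤ D.neg).card : ℝ)
    · obtain ⟨E, hE0, hEdeg, hEcount⟩ := hbad
      set S := A.filter (fun D => E ≤ D.pos) with hSdef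
      set S' := A.filter (fun D => E ≤ D.neg) with hS'def
      have hsplit : ((A.filter fun D => E ≤ D.pos ∨ E ≤ D.neg).card : ℝ)
          ≤ (S.card : ℝ) + S'.card := by
        rw [Finset.filter_or]
        exact_mod_cast Finset.card_union_le _ _
      have hA1 : (1:ℝ) ≤ A.card := by
        exact_mod_cast Nat.one_le_iff_ne_zero.mpr (Finset.card_ne_zero_of_mem hne.choose_spec)
      rcases le_total (S'.card : ℝ) (S.card : ℝ) with hcmp | hcmp
      · -- use the zero-part side
        have h2 : 2 / M₂ * (A.card : ℝ) ≤ 2 * S.card := by linarith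
        have hScard : (A.card : ℝ) ≤ M₂ * S.card := by
          rw [div_mul_eq_mul_div, div_le_iff₀ hM₂0] at h2
          nlinarith
        have hSpos : (0:ℝ) < S.card := by nlinarith
        have hSne : S.Nonempty := Finset.card_pos.mp (by exact_mod_cast hSpos)
        set A₁ := S.image (fun D => D - E) with hA₁def
        have hcard1 : (A₁.card : ℝ) = S.card := by
          rw [hA₁def, Finset.card_image_of_injective _ sub_left_injective]
        have hmemS : ∀ D ∈ S, E ≤ D.pos ∧ D ∈ A := by
          intro D hD
          rw [hSdef, Finset.mem_filter] at hD
          exact ⟨hD.2, hD.1⟩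
        have hb1 : ∀ D ∈ A₁, (FFDivisor.dsum D : ℝ) < n * M₁ := by
          intro D hD
          rw [hA₁def, Finset.mem_image] at hD
          obtain ⟨D', hD'S, rfl⟩ := hD
          obtain ⟨hle, hmem⟩ := hmemS D' hD'S
          have := hbound D' hmem
          rw [FFDivisor.dsum_sub hE0 hle]
          push_cast
          push_cast at this
          linarith
        obtain ⟨A₀, B', k, hne₀, hprop, hcard, hbadc⟩ :=
          ih A₁ (hSne.image _) hb1
        refine ⟨A₀, B' + E, k + 1, hne₀, ?_, ?_, hbadc⟩
        · intro D hD
          obtain ⟨hmem1, hds⟩ := hprop D hD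
          rw [hA₁def, Finset.mem_image] at hmem1
          obtain ⟨D', hD'S, hEq⟩ := hmem1
          obtain ⟨hle, hmem⟩ := hmemS D' hD'S
          have hDB : D + (B' + E) = D' := by
            rw [← add_assoc, ← hEq]; abel
          have hds2 : (FFDivisor.dsum (D + B') : ℝ) = FFDivisor.dsum D' - E.deg := by
            rw [← hEq, FFDivisor.dsum_sub hE0 hle]; push_cast; ring
          refine ⟨hDB ▸ hmem, ?_⟩
          rw [hDB]
          push_cast
          push_cast at hds hds2
          linarith
        · calc (A.card : ℝ) ≤ M₂ * S.card := hScard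
            _ = M₂ * A₁.card := by rw [hcard1]
            _ ≤ M₂ * (M₂ ^ k * A₀.card) :=
              mul_le_mul_of_nonneg_left hcard (le_of_lt hM₂0)
            _ = M₂ ^ (k + 1) * A₀.card := by rw [pow_succ]; ring
      · -- use the pole-part side
        have h2 : 2 / M₂ * (A.card : ℝ) ≤ 2 * S'.card := by linarith
        have hScard : (A.card : ℝ) ≤ M₂ * S'.card := by
          rw [div_mul_eq_mul_div, div_le_iff₀ hM₂0] at h2
          nlinarith
        have hSpos : (0:ℝ) < S'.card := by nlinarith
        have hSne : S'.Nonempty := Finset.card_pos.mp (by exact_mod_cast hSpos)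
        set A₁ := S'.image (fun D => D + E) with hA₁def
        have hcard1 : (A₁.card : ℝ) = S'.card := by
          rw [hA₁def, Finset.card_image_of_injective _ (add_left_injective E)]
        have hmemS : ∀ D ∈ S', E ≤ D.neg ∧ D ∈ A := by
          intro D hD
          rw [hS'def, Finset.mem_filter] at hD
          exact ⟨hD.2, hD.1⟩
        have hb1 : ∀ D ∈ A₁, (FFDivisor.dsum D : ℝ) < n * M₁ := by
          intro D hD
          rw [hA₁def, Finset.mem_image] at hD
          obtain ⟨D', hD'S, rfl⟩ := hD
          obtain ⟨hle, hmem⟩ := hmemS D' hD'S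
          have := hbound D' hmem
          rw [FFDivisor.dsum_add hE0 hle]
          push_cast
          push_cast at this
          linarith
        obtain ⟨A₀, B', k, hne₀, hprop, hcard, hbadc⟩ :=
          ih A₁ (hSne.image _) hb1
        refine ⟨A₀, B' - E, k + 1, hne₀, ?_, ?_, hbadc⟩
        · intro D hD
          obtain ⟨hmem1, hds⟩ := hprop D hD
          rw [hA₁def, Finset.mem_image] at hmem1
          obtain ⟨D', hD'S, hEq⟩ := hmem1
          obtain ⟨hle, hmem⟩ := hmemS D' hD'S
          have hDB : D + (B' - E) = D' := by
            have h : D + B' = D' + E := hEq.symm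
            rw [sub_eq_add_neg, ← add_assoc, h]; abel
          have hds2 : (FFDivisor.dsum (D + B') : ℝ) = FFDivisor.dsum D' - E.deg := by
            rw [← hEq, FFDivisor.dsum_add hE0 hle]; push_cast; ring
          refine ⟨hDB ▸ hmem, ?_⟩
          rw [hDB]
          push_cast
          push_cast at hds hds2
          linarith
        · calc (A.card : ℝ) ≤ M₂ * S'.card := hScard
            _ = M₂ * A₁.card := by rw [hcard1]
            _ ≤ M₂ * (M₂ ^ k * A₀.card) :=
              mul_le_mul_of_nonneg_left hcard (le_of_lt hM₂0)
            _ = M₂ ^ (k + 1) * A₀.card := by rw [pow_succ]; ring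
    · push_neg at hbad
      exact ⟨A, 0, 0, hne, fun D hD => ⟨by simpa using hD, by simp⟩, by simp,
        fun E h1 h2 => lt_of_not_ge fun h => absurd (hbad E h1 h2) (not_lt.mpr h)⟩

/-- the greedy extraction step in the proof of Lemma 6 of the paper.
Given a nonempty finite set `A'` of divisors `D` of `K` with `deg D₀ + deg D_∞ ≤ R`,
there are a finite set `A₀` of such divisors and a divisor `B` with `A₀ + B ⊆ A'`,
`#A₀ ≥ M₂^(-R/M₁) · #A'`, and such that for every effective divisor `E` of degree `> M₁`
fewer than `(2/M₂) · #A₀` elements `D` of `A₀` satisfy `E ≤ D₀` or `E ≤ D_∞`. -/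
theorem divisor_set_regularization
    (Fq : Type) [Field Fq] [Fintype Fq]
    (K : Type) [Field K] [Algebra Fq K] [Algebra (RatFunc Fq) K]
    [IsScalarTower Fq (RatFunc Fq) K] [FiniteDimensional (RatFunc Fq) K]
    (R M₁ M₂ : ℝ) (hR : 0 < R) (hM₁ : 0 < M₁) (hM₂ : 1 < M₂)
    (A' : Finset (FFDivisor Fq K)) (hne : A'.Nonempty)
    (hA' : ∀ D ∈ A', (D.pos.deg : ℝ) + (D.neg.deg : ℝ) ≤ R) :
    ∃ (A₀ : Finset (FFDivisor Fq K)) (B : FFDivisor Fq K),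
      (∀ D ∈ A₀, (D.pos.deg : ℝ) + (D.neg.deg : ℝ) ≤ R) ∧
      (∀ D ∈ A₀, D + B ∈ A') ∧
      (M₂ ^ (-(R / M₁)) * (A'.card : ℝ) ≤ (A₀.card : ℝ)) ∧
      ∀ E : FFDivisor Fq K, 0 ≤ E → M₁ < (E.deg : ℝ) →
        ({D ∈ (A₀ : Set (FFDivisor Fq K)) | E ≤ D.pos ∨ E ≤ D.neg}.ncard : ℝ) <
          2 / M₂ * (A₀.card : ℝ) := by
    classical
  have hM₂0 : (0:ℝ) < M₂ := lt_trans one_pos hM₂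
  have hds : ∀ D : FFDivisor Fq K, (FFDivisor.dsum D : ℝ) = (D.pos.deg : ℝ) + (D.neg.deg : ℝ) := by
    intro D; unfold FFDivisor.dsum; push_cast; ring
  obtain ⟨A₀, B, k, hne₀, hprop, hcard, hbadc⟩ :=
    FFDivisor.regularize M₁ M₂ hM₁ hM₂ (⌊R / M₁⌋₊ + 1) A' hne (by
      intro D hD
      have h1 := hA' D hD
      have h2 : R / M₁ < (⌊R / M₁⌋₊ : ℝ) + 1 := Nat.lt_floor_add_one _
      rw [div_lt_iff₀ hM₁] at h2
      rw [hds D]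
      push_cast
      nlinarith)
  have hkM : (k : ℝ) * M₁ ≤ R := by
    obtain ⟨D, hD⟩ := hne₀
    obtain ⟨hmem, hineq⟩ := hprop D hD
    have h0 : (0:ℝ) ≤ (FFDivisor.dsum D : ℝ) := by exact_mod_cast FFDivisor.dsum_nonneg D
    have hR' := hA' _ hmem
    rw [← hds _] at hR'
    linarith
  refine ⟨A₀, B, ?_, fun D hD => (hprop D hD).1, ?_, ?_⟩
  · intro D hD
    obtain ⟨hmem, hineq⟩ := hprop D hD
    have hR' := hA' _ hmem
    rw [← hds _] at hR'
    rw [← hds D]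
    have hk0 : (0:ℝ) ≤ (k : ℝ) * M₁ := mul_nonneg (Nat.cast_nonneg _) hM₁.le
    linarith
  · have hk : (k : ℝ) ≤ R / M₁ := (le_div_iff₀ hM₁).mpr hkM
    have hpow : (M₂:ℝ) ^ k ≤ M₂ ^ (R / M₁) := by
      rw [← Real.rpow_natCast M₂ k]
      exact Real.rpow_le_rpow_of_exponent_le hM₂.le hk
    have hposr : (0:ℝ) < M₂ ^ (R / M₁) := Real.rpow_pos_of_pos hM₂0 _
    have h3 : (A'.card : ℝ) ≤ M₂ ^ (R / M₁) * A₀.card :=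
      le_trans hcard (mul_le_mul_of_nonneg_right hpow (Nat.cast_nonneg _))
    rw [Real.rpow_neg hM₂0.le, inv_mul_le_iff₀ hposr]
    exact h3
  · intro E hE0 hEdeg
    have hset : {D ∈ (A₀ : Set (FFDivisor Fq K)) | E ≤ D.pos ∨ E ≤ D.neg}
        = ↑(A₀.filter fun D => E ≤ D.pos ∨ E ≤ D.neg) := by
      ext D; simp
    rw [hset, Set.ncard_coe_finset]
    exact hbadc E hE0 hEdeg
end
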